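/- Suppose M1 is positive definite, let W = M1⁻¹·B2 and S = Wᵀ·M1·W = [[x, a, b], [a, y, t], [b, t, z]], and suppose b < y. Define the quartic Hankel block C with β40 = x + 1, β31 = a, β22 = y, β13 = t, β04 = z + (y − b)², i.e., C = [[x+1, a, y], [a, y, t], [y, t, z + (y−b)²]]. Then C − S = [[1, 0, y−b], [0, 0, 0], [y−b, 0, (y−b)²]]; C − S is positive semidefinite of rank 1; and the 6×6 block matrix M2 = [[M1, B2], [B2ᵀ, C]] is positive semidefinite with rank M2 = 4. -/
import Mathlib


open Matrix

/-- The moment matrix `M(1)` of a cubic moment sequence. -/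
def M1 (β00 β10 β01 β20 β11 β02 : ℝ) : Matrix (Fin 3) (Fin 3) ℝ :=
  !![β00, β10, β01; β10, β20, β11; β01, β11, β02]

/-- The block `B(2)` of a cubic moment sequence. -/
def B2 (β20 β11 β02 β30 β21 β12 β03 : ℝ) : Matrix (Fin 3) (Fin 3) ℝ :=
  !![β20, β11, β02; β30, β21, β12; β21, β12, β03]

/-- A real block-diagonal matrix has rank the sum of the ranks of the blocks. -/
lemma rank_fromBlocks_diag {m n : Type*} [Fintype m] [Fintype n]
    [DecidableEq m] [DecidableEq n] (A : Matrix m m ℝ) (D : Matrix n n ℝ) :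
    (Matrix.fromBlocks A 0 0 D).rank = A.rank + D.rank := by
  classical
  set e := LinearEquiv.sumArrowLequivProdArrow m n ℝ ℝ with he
  have hf : (Matrix.fromBlocks A 0 0 D).mulVecLin
      = e.symm.toLinearMap ∘ₗ ((A.mulVecLin.prodMap D.mulVecLin) ∘ₗ e.toLinearMap) := by
    apply LinearMap.ext; intro v
    funext i
    cases i <;>
      simp [he, Matrix.mulVecLin_apply, Matrix.fromBlocks_mulVec,
        LinearEquiv.sumArrowLequivProdArrow, Equiv.sumArrowEquivProdArrow]
  have hrange : LinearMap.range (A.mulVecLin.prodMap D.mulVecLin)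
      = (LinearMap.range A.mulVecLin).prod (LinearMap.range D.mulVecLin) := by
    ext c
    constructor
    · rintro ⟨w, rfl⟩
      exact ⟨⟨w.1, rfl⟩, ⟨w.2, rfl⟩⟩
    · rintro ⟨⟨w₁, hw₁⟩, ⟨w₂, hw₂⟩⟩
      exact ⟨(w₁, w₂), by simp [LinearMap.prodMap_apply, hw₁, hw₂, Prod.ext_iff]⟩
  rw [Matrix.rank, hf, LinearMap.range_comp, LinearMap.range_comp, LinearEquiv.range,
    Submodule.map_top, LinearEquiv.finrank_map_eq, hrange]
  let eq : ((LinearMap.range A.mulVecLin).prod (LinearMap.range D.mulVecLin)) ≃ₗ[ℝ]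
      (LinearMap.range A.mulVecLin) × (LinearMap.range D.mulVecLin) :=
    { toFun := fun v => (⟨v.1.1, v.2.1⟩, ⟨v.1.2, v.2.2⟩)
      invFun := fun v => ⟨(v.1.1, v.2.1), ⟨v.1.2, v.2.2⟩⟩
      map_add' := fun _ _ => rfl
      map_smul' := fun _ _ => rfl
      left_inv := fun _ => rfl
      right_inv := fun _ => rfl }
  rw [eq.finrank_eq, Module.finrank_prod, Matrix.rank, Matrix.rank]

/-- The rank of the row `[1, 0, c]` is one. -/
lemma rank_one_row (c : ℝ) : (!![(1:ℝ), 0, c]).rank = 1 := by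
  have hsurj : Function.Surjective (!![(1:ℝ), 0, c]).mulVecLin := by
    intro w
    refine ⟨![w 0, 0, 0], ?_⟩
    funext i
    fin_cases i
    simp [Matrix.mulVecLin_apply, Matrix.mulVec, dotProduct, Fin.sum_univ_succ]
  rw [Matrix.rank, LinearMap.range_eq_top.mpr hsurj, finrank_top]
  simp


/-- Case `b < y` in Theorem 3.8: with the choice of quartic moments
`β40 = x + 1, β31 = a, β22 = y, β13 = t, β04 = z + (y − b)²`, one gets
`C − S = [[1, 0, y−b], [0, 0, 0], [y−b, 0, (y−b)²]]`, `C − S ⪰ 0` of rank `1`,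
and `M(2) ⪰ 0` with `rank M(2) = 4`. -/
theorem cubic_b_lt_y_extension
    (β00 β10 β01 β20 β11 β02 β30 β21 β12 β03 : ℝ) (hβ00 : 0 < β00)
    (x a b y t z : ℝ)
    (hpd : (M1 β00 β10 β01 β20 β11 β02).PosDef)
    (hS : ((M1 β00 β10 β01 β20 β11 β02)⁻¹ * B2 β20 β11 β02 β30 β21 β12 β03)ᵀ *
            M1 β00 β10 β01 β20 β11 β02 *
            ((M1 β00 β10 β01 β20 β11 β02)⁻¹ * B2 β20 β11 β02 β30 β21 β12 β03) =
          !![x, a, b; a, y, t; b, t, z])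
    (hby : b < y) :
    !![x + 1, a, y; a, y, t; y, t, z + (y - b) ^ 2] - !![x, a, b; a, y, t; b, t, z] =
        !![1, 0, y - b; 0, 0, 0; y - b, 0, (y - b) ^ 2] ∧
      (!![x + 1, a, y; a, y, t; y, t, z + (y - b) ^ 2] -
        !![x, a, b; a, y, t; b, t, z]).PosSemidef ∧
      (!![x + 1, a, y; a, y, t; y, t, z + (y - b) ^ 2] -
        !![x, a, b; a, y, t; b, t, z]).rank = 1 ∧
      (Matrix.fromBlocks (M1 β00 β10 β01 β20 β11 β02)
          (B2 β20 β11 β02 β30 β21 β12 β03)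
          (B2 β20 β11 β02 β30 β21 β12 β03)ᵀ
          !![x + 1, a, y; a, y, t; y, t, z + (y - b) ^ 2]).PosSemidef ∧
      (Matrix.fromBlocks (M1 β00 β10 β01 β20 β11 β02)
          (B2 β20 β11 β02 β30 β21 β12 β03)
          (B2 β20 β11 β02 β30 β21 β12 β03)ᵀ
          !![x + 1, a, y; a, y, t; y, t, z + (y - b) ^ 2]).rank = 4 := by
  classical
  set M := M1 β00 β10 β01 β20 β11 β02 with hM
  set B := B2 β20 β11 β02 β30 β21 β12 β03 with hB
  set C : Matrix (Fin 3) (Fin 3) ℝ := !![x + 1, a, y; a, y, t; y, t, z + (y - b) ^ 2] with hC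
  set S : Matrix (Fin 3) (Fin 3) ℝ := !![x, a, b; a, y, t; b, t, z] with hSdef
  set D : Matrix (Fin 3) (Fin 3) ℝ := !![1, 0, y - b; 0, 0, 0; y - b, 0, (y - b) ^ 2] with hDdef
  haveI : Invertible M := hpd.isUnit.invertible
  have hMt : Mᵀ = M := by
    have h := hpd.1
    rwa [Matrix.IsHermitian, Matrix.conjTranspose_eq_transpose_of_trivial] at h
  have hBS : Bᵀ * M⁻¹ * B = S := by
    rw [← hS, Matrix.transpose_mul, Matrix.transpose_nonsing_inv, hMt,
      Matrix.inv_mul_cancel_right_of_invertible, Matrix.mul_assoc]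
  have hCS : C - S = D := by
    ext i j
    fin_cases i <;> fin_cases j <;>
      simp [hC, hSdef, hDdef, Matrix.sub_apply, Matrix.vecHead, Matrix.vecTail] <;> ring
  set u : Matrix (Fin 1) (Fin 3) ℝ := !![(1:ℝ), 0, y - b] with hu
  have hD : D = uᴴ * u := by
    ext i j
    fin_cases i <;> fin_cases j <;>
      simp [hDdef, hu, Matrix.mul_apply, Fin.sum_univ_succ, Matrix.conjTranspose_apply,
        Matrix.vecHead, Matrix.vecTail] <;> ring
  have hpsdD : D.PosSemidef := hD ▸ Matrix.posSemidef_conjTranspose_mul_self u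
  have hrkD : D.rank = 1 := by
    rw [hD, Matrix.rank_conjTranspose_mul_self]
    exact rank_one_row (y - b)
  refine ⟨hCS, hCS ▸ hpsdD, hCS ▸ hrkD, ?_, ?_⟩
  · rw [show Bᵀ = Bᴴ from (Matrix.conjTranspose_eq_transpose_of_trivial B).symm]
    rw [Matrix.PosDef.fromBlocks₁₁ B C hpd,
      Matrix.conjTranspose_eq_transpose_of_trivial, hBS, hCS]
    exact hpsdD
  · have hdec := Matrix.fromBlocks_eq_of_invertible₁₁ M B Bᵀ C
    have hK : C - Bᵀ * ⅟M * B = D := by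
      rw [Matrix.invOf_eq_nonsing_inv, hBS, hCS]
    have hdL1 : IsUnit (Matrix.fromBlocks (1 : Matrix (Fin 3) (Fin 3) ℝ) 0 (Bᵀ * ⅟M) 1).det := by
      rw [Matrix.det_fromBlocks_zero₁₂]; simp
    have hdL2 : IsUnit (Matrix.fromBlocks (1 : Matrix (Fin 3) (Fin 3) ℝ) (⅟M * B) 0 1).det := by
      rw [Matrix.det_fromBlocks_zero₂₁]; simp
    rw [hdec, hK]
    rw [Matrix.rank_mul_eq_left_of_isUnit_det _ _ hdL2,
      Matrix.rank_mul_eq_right_of_isUnit_det _ _ hdL1,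
      rank_fromBlocks_diag, hrkD, Matrix.rank_of_isUnit M hpd.isUnit]
    simp
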